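/- arXiv:1901.06673 — 6 statements merged into one kernel-verified Lean document; each statement's English description precedes it below -/
import Mathlib

section
/- Let n ≥ 2, λ ∈ (0,1), and let b_1 < b_2 < ⋯ < b_n be real numbers. Let E be a nonempty subset of ℝ satisfying E = ⋃_{i=1}^{n} (λ·E + b_i). If the strong separation condition fails, i.e. there exist indices i ≠ j with (λ·E + b_i) ∩ (λ·E + b_j) ≠ ∅, then E contains a three-term arithmetic progression: there exist x, y, z ∈ E with x ≠ y and x + z = 2y. -/
/-! If `λx + b_i = λy + b_j` with `i ≠ j`, then `λx + b_j, λx + b_i, λy + b_i` are points of `E`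
in arithmetic progression with common difference `b_i - b_j ≠ 0`. -/

theorem Set.mapsTo_of_eq_iUnion_image {α ι : Type*} {E : Set α} {f : ι → α → α}
    (hself : E = ⋃ i, f i '' E) (i : ι) : Set.MapsTo (f i) E E :=
  Set.mapsTo_iff_image_subset.2 <| (Set.subset_iUnion (fun i => f i '' E) i).trans hself.ge

theorem ap_of_ssc_fails_general (n : ℕ) (lam : ℝ)
    (b : Fin n → ℝ) (hb : StrictMono b)
    (E : Set ℝ)
    (hself : E = ⋃ i : Fin n, (fun x => lam * x + b i) '' E)
    (hfail : ∃ i j : Fin n, i ≠ j ∧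
      (((fun x => lam * x + b i) '' E) ∩ ((fun x => lam * x + b j) '' E)).Nonempty) :
    ∃ x ∈ E, ∃ y ∈ E, ∃ z ∈ E, x ≠ y ∧ x + z = 2 * y := by
  have hmaps := Set.mapsTo_of_eq_iUnion_image hself
  obtain ⟨i, j, hij, -, ⟨x, hx, hxu⟩, ⟨y, hy, rfl⟩⟩ := hfail
  have hoverlap : lam * x + b i = lam * y + b j := hxu
  refine ⟨lam * x + b j, hmaps j hx, lam * x + b i, hmaps i hx, lam * y + b i, hmaps i hy,
    ?_, by linarith⟩
  intro h
  exact hij (hb.injective (add_left_cancel h)).symm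

/-- If the strong separation condition fails for a self-similar set
`E = ⋃ i, (λ • E + b i)` with strictly increasing translations, then `E` contains a
three-term arithmetic progression. -/
theorem ap_of_ssc_fails (n : ℕ) (hn : 2 ≤ n) (lam : ℝ) (hlam : lam ∈ Set.Ioo (0:ℝ) 1)
    (b : Fin n → ℝ) (hb : StrictMono b)
    (E : Set ℝ) (hE : E.Nonempty)
    (hself : E = ⋃ i : Fin n, (fun x => lam * x + b i) '' E)
    (hfail : ∃ i j : Fin n, i ≠ j ∧
      (((fun x => lam * x + b i) '' E) ∩ ((fun x => lam * x + b j) '' E)).Nonempty) :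
    ∃ x ∈ E, ∃ y ∈ E, ∃ z ∈ E, x ≠ y ∧ x + z = 2 * y :=
  ap_of_ssc_fails_general n lam b hb E hself hfail
end

section
/- Let n ≥ 2 be an integer, λ ∈ (0, 1/n), α = (1 − nλ)/(n − 1), and let E_λ^n = { (λ+α)·∑_{t=1}^{∞} a_t λ^t : a_t ∈ {0,1,…,n−1} for all t ≥ 1 }. If E_λ^n contains an arithmetic progression of length n + 1 (i.e. there exist a ∈ ℝ and δ > 0 with a + iδ ∈ E_λ^n for all 0 ≤ i ≤ n), then λ ≥ 1/(2n − 1). -/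
/-- The homogeneous self-similar set `E_λ^n` with digits `{0, …, n-1}` and
`α = (1 - nλ)/(n - 1)`, consisting of all points `(λ+α)·∑_{t≥1} a_t λ^t`. -/
def selfSimilarSet (n : ℕ) (lam : ℝ) : Set ℝ :=
  {x : ℝ | ∃ a : ℕ → ℕ, (∀ t, a t < n) ∧
    x = (lam + (1 - n * lam) / (n - 1)) * ∑' t : ℕ, (a t : ℝ) * lam ^ (t + 1)}

/-!
If `λ < 1/(2n-1)`, equivalently `λ < α`, the gap `λα` between the `n` first-level pieces
`λ • ((λ + α) j + E)` of `E ⊆ [0, λ]` exceeds their diameter `λ²`. Two of the `n + 1` terms of a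
progression lie in the same piece, so its difference is at most `λ²`; hence consecutive terms
never cross a gap and the whole progression lies in one piece. Blowing that piece up by `1/λ`
gives a progression in `E` with difference `δ/λ`, and iterating produces progressions in
`E ⊆ [0, λ]` of arbitrarily large difference.
-/

open Set

def HasArithProg (s : Set ℝ) (k : ℕ) (δ : ℝ) : Prop :=
  ∃ a : ℝ, ∀ i : ℕ, i ≤ k → a + i * δ ∈ s

lemma HasArithProg.mul_le_of_subset_Icc {s : Set ℝ} {k : ℕ} {δ u v : ℝ}
    (h : HasArithProg s k δ) (hs : s ⊆ Icc u v) : k * δ ≤ v - u := by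
  obtain ⟨a, ha⟩ := h
  have hfirst := hs (ha 0 k.zero_le)
  have hlast := hs (ha k le_rfl)
  simp only [Nat.cast_zero, zero_mul, add_zero, mem_Icc] at hfirst hlast
  linarith [hfirst.1, hlast.2]

lemma le_abs_sub_of_ne {a δ : ℝ} (hδ : 0 ≤ δ) {p q : ℕ} (h : p ≠ q) :
    δ ≤ |(a + p * δ) - (a + q * δ)| := by
  have hpq : (1 : ℤ) ≤ |(p : ℤ) - q| := Int.one_le_abs (sub_ne_zero.2 (by exact_mod_cast h))
  rw [show (a + p * δ) - (a + q * δ) = (p - q) * δ by ring, abs_mul, abs_of_nonneg hδ]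
  exact le_mul_of_one_le_left hδ (by exact_mod_cast hpq)

lemma mul_sub_le_abs_sub_of_ne {c s y y' : ℝ} {j j' : ℕ} (hc : 0 ≤ c) (hs : 0 ≤ s)
    (hy : y ∈ Icc 0 s) (hy' : y' ∈ Icc 0 s) (hj : j ≠ j') :
    s * (c - s) ≤ |s * (c * j + y) - s * (c * j' + y')| := by
  wlog hlt : j < j' generalizing j j' y y'
  · rw [abs_sub_comm]
    exact this hy' hy hj.symm (lt_of_le_of_ne (not_lt.1 hlt) hj.symm)
  have hjj' : (j : ℝ) + 1 ≤ j' := by exact_mod_cast hlt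
  rw [abs_sub_comm]
  refine le_trans ?_ (le_abs_self _)
  have : s * (c * (j + 1) + 0) ≤ s * (c * j' + y') := by gcongr; exact hy'.1
  nlinarith [hy.2]

lemma hasSum_mul_pow_succ {lam : ℝ} (b : ℝ) (h0 : 0 ≤ lam) (h1 : lam < 1) :
    HasSum (fun t : ℕ => b * lam ^ (t + 1)) (b * lam / (1 - lam)) := by
  simpa only [div_eq_mul_inv, pow_succ', mul_assoc] using
    (hasSum_geometric_of_lt_one h0 h1).mul_left (b * lam)

lemma natCast_le_sub_one_of_lt {m n : ℕ} (h : m < n) : (m : ℝ) ≤ n - 1 := by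
  have : (m : ℝ) + 1 ≤ n := by exact_mod_cast h
  linarith

section selfSimilarSet

variable {n : ℕ} {lam : ℝ}

lemma summable_digit_mul_pow (h0 : 0 ≤ lam) (h1 : lam < 1) {a : ℕ → ℕ} (ha : ∀ t, a t < n) :
    Summable fun t : ℕ => (a t : ℝ) * lam ^ (t + 1) :=
  (hasSum_mul_pow_succ ((n : ℝ) - 1) h0 h1).summable.of_nonneg_of_le (fun _ => by positivity)
    fun t => mul_le_mul_of_nonneg_right (natCast_le_sub_one_of_lt (ha t)) (by positivity)

lemma selfSimilarSet_subset_Icc (hn : 2 ≤ n) (h0 : 0 ≤ lam) (h1 : lam < 1) :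
    selfSimilarSet n lam ⊆ Icc 0 lam := by
  rintro _ ⟨a, ha, rfl⟩
  have hn' : (0 : ℝ) < n - 1 := by
    have : (2 : ℝ) ≤ n := by exact_mod_cast hn
    linarith
  have hscale : lam + (1 - n * lam) / (n - 1) = (1 - lam) / (n - 1) := by
    field_simp
    ring
  have hscale0 : 0 ≤ (1 - lam) / (n - 1) := div_nonneg (by linarith) hn'.le
  have hsum_le : ∑' t : ℕ, (a t : ℝ) * lam ^ (t + 1) ≤ (n - 1) * lam / (1 - lam) :=
    hasSum_le (fun t => mul_le_mul_of_nonneg_right (natCast_le_sub_one_of_lt (ha t)) (by positivity))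
      (summable_digit_mul_pow h0 h1 ha).hasSum (hasSum_mul_pow_succ _ h0 h1)
  rw [hscale]
  refine ⟨mul_nonneg hscale0 (tsum_nonneg fun _ => by positivity), ?_⟩
  calc (1 - lam) / (n - 1) * ∑' t : ℕ, (a t : ℝ) * lam ^ (t + 1)
      ≤ (1 - lam) / (n - 1) * ((n - 1) * lam / (1 - lam)) :=
        mul_le_mul_of_nonneg_left hsum_le hscale0
    _ = lam := by field_simp [(sub_pos.2 h1).ne']

lemma exists_digit_of_mem_selfSimilarSet (h0 : 0 ≤ lam) (h1 : lam < 1) {x : ℝ}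
    (hx : x ∈ selfSimilarSet n lam) :
    ∃ j < n, ∃ y ∈ selfSimilarSet n lam,
      x = lam * ((lam + (1 - n * lam) / (n - 1)) * j + y) := by
  obtain ⟨a, ha, rfl⟩ := hx
  refine ⟨a 0, ha 0, _, ⟨fun t => a (t + 1), fun t => ha (t + 1), rfl⟩, ?_⟩
  rw [(summable_digit_mul_pow h0 h1 ha).tsum_eq_zero_add]
  have hshift : ∑' t : ℕ, (a (t + 1) : ℝ) * lam ^ (t + 1 + 1)
      = lam * ∑' t : ℕ, (a (t + 1) : ℝ) * lam ^ (t + 1) := by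
    rw [← tsum_mul_left]
    congr 1 with t
    ring
  rw [hshift]
  ring

lemma HasArithProg.selfSimilarSet_div (hn : 2 ≤ n) (h0 : 0 < lam) (h1 : lam < 1)
    (hgap : lam < (1 - n * lam) / (n - 1)) {δ : ℝ} (hδ : 0 < δ)
    (h : HasArithProg (selfSimilarSet n lam) n δ) :
    HasArithProg (selfSimilarSet n lam) n (δ / lam) := by
  obtain ⟨a, ha⟩ := h
  have hsub := selfSimilarSet_subset_Icc hn h0.le h1
  choose j hj y hy hxy using fun i : Fin (n + 1) =>
    exists_digit_of_mem_selfSimilarSet h0.le h1 (ha i i.is_le)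
  set c := lam + (1 - n * lam) / (n - 1) with hc
  -- pigeonhole: two of the `n + 1` terms lie in the same piece, of diameter `λ * λ`
  have hδ_le : δ ≤ lam * lam := by
    obtain ⟨p, q, hpq, hjpq⟩ :=
      Fintype.exists_ne_map_eq_of_card_lt (fun i => (⟨j i, hj i⟩ : Fin n)) (by simp)
    have hjpq : j p = j q := congrArg Fin.val hjpq
    calc δ ≤ |(a + (p : ℕ) * δ) - (a + (q : ℕ) * δ)| :=
          le_abs_sub_of_ne hδ.le (Fin.val_injective.ne hpq)
      _ = lam * |y p - y q| := by
          rw [hxy p, hxy q, hjpq, ← mul_sub, abs_mul, abs_of_pos h0]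
          ring_nf
      _ ≤ lam * lam := mul_le_mul_of_nonneg_left
          (abs_sub_le_of_nonneg_of_le (hsub (hy p)).1 (hsub (hy p)).2 (hsub (hy q)).1
            (hsub (hy q)).2) h0.le
  -- consecutive terms are `δ < λ * α` apart, so they cannot straddle a gap
  have hstep : ∀ i : Fin n, j i.succ = j i.castSucc := by
    intro i
    by_contra hne
    have hgap_le := mul_sub_le_abs_sub_of_ne (c := c) (by linarith) h0.le (hsub (hy i.succ))
      (hsub (hy i.castSucc)) hne
    rw [← hxy, ← hxy, Fin.val_succ, Fin.val_castSucc, Nat.cast_succ,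
      show a + (i + 1 : ℝ) * δ - (a + i * δ) = δ by ring, abs_of_pos hδ] at hgap_le
    have : lam * lam < lam * (c - lam) := mul_lt_mul_of_pos_left (by linarith) h0
    linarith
  have hconst : ∀ i, j i = j 0 := Fin.induction rfl fun i ih => (hstep i).trans ih
  refine ⟨(a - lam * (c * j 0)) / lam, fun i hi => ?_⟩
  have hxi := hxy ⟨i, Nat.lt_succ_of_le hi⟩
  rw [hconst] at hxi
  convert hy ⟨i, Nat.lt_succ_of_le hi⟩ using 1
  field_simp
  linarith

lemma HasArithProg.selfSimilarSet_div_pow (hn : 2 ≤ n) (h0 : 0 < lam) (h1 : lam < 1)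
    (hgap : lam < (1 - n * lam) / (n - 1)) {δ : ℝ} (hδ : 0 < δ)
    (h : HasArithProg (selfSimilarSet n lam) n δ) (k : ℕ) :
    HasArithProg (selfSimilarSet n lam) n (δ / lam ^ k) := by
  induction k with
  | zero => simpa using h
  | succ k ih =>
    rw [pow_succ, ← div_div]
    exact ih.selfSimilarSet_div hn h0 h1 hgap (by positivity)

end selfSimilarSet

/-- If `E_λ^n` contains an arithmetic progression of length `n + 1`,
then `λ ≥ 1/(2n - 1)`. -/
theorem ratio_ge_of_ap_length_succ (n : ℕ) (hn : 2 ≤ n)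
    (lam : ℝ) (hlam : lam ∈ Set.Ioo (0:ℝ) (1 / n))
    (hAP : ∃ a δ : ℝ, 0 < δ ∧ ∀ i : ℕ, i ≤ n → a + i * δ ∈ selfSimilarSet n lam) :
    lam ≥ 1 / (2 * n - 1) := by
  by_contra! hlt
  have h0 : 0 < lam := hlam.1
  have hn' : (2 : ℝ) ≤ n := by exact_mod_cast hn
  have hlt' : lam * (2 * n - 1) < 1 := (lt_div_iff₀ (by linarith)).1 hlt
  have h1 : lam < 1 := by nlinarith
  have hgap : lam < (1 - n * lam) / (n - 1) := by
    rw [lt_div_iff₀ (by linarith)]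
    linarith
  obtain ⟨a, δ, hδ, hap⟩ := hAP
  obtain ⟨k, hk⟩ := exists_pow_lt_of_lt_one (by positivity : 0 < (n : ℝ) * δ) h1
  have hfit := (HasArithProg.selfSimilarSet_div_pow hn h0 h1 hgap hδ ⟨a, hap⟩ k)
    |>.mul_le_of_subset_Icc (selfSimilarSet_subset_Icc hn h0.le h1)
  rw [mul_div_assoc', div_le_iff₀ (pow_pos h0 k)] at hfit
  nlinarith [pow_pos h0 k]
end

section
/- Let n ≥ 2 be an integer, λ ∈ (0, 1/n), α = (1 − nλ)/(n − 1), and let E_λ^n = { (λ+α)·∑_{t=1}^{∞} a_t λ^t : a_t ∈ {0,1,…,n−1} for all t ≥ 1 }. If λ ≥ 1/(2n − 1), then E_λ^n contains an arithmetic progression of length 2n: there exist a ∈ ℝ and δ > 0 with a + iδ ∈ E_λ^n for all 0 ≤ i ≤ 2n − 1. -/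
open Filter Topology Pointwise

noncomputable section

def digitSeries (lam : ℝ) (a : ℕ → ℕ) : ℝ :=
  ∑' t : ℕ, (a t : ℝ) * lam ^ (t + 1)

def digitSet (N : ℕ) (lam : ℝ) : Set ℝ :=
  {x : ℝ | ∃ a : ℕ → ℕ, (∀ t, a t < N) ∧ x = digitSeries lam a}

end

section DigitSeries

variable {lam : ℝ}

theorem summable_digitSeries (h0 : 0 ≤ lam) (h1 : lam < 1) {a : ℕ → ℕ} {C : ℕ}
    (ha : ∀ t, a t ≤ C) : Summable fun t : ℕ => (a t : ℝ) * lam ^ (t + 1) := by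
  refine .of_nonneg_of_le (fun t => by positivity) (fun t => ?_)
    ((summable_geometric_of_lt_one h0 h1).mul_left ((C : ℝ) * lam))
  calc (a t : ℝ) * lam ^ (t + 1) ≤ C * lam ^ (t + 1) := by gcongr; exact_mod_cast ha t
    _ = C * lam * lam ^ t := by ring

theorem digitSeries_add (h0 : 0 ≤ lam) (h1 : lam < 1) {a b : ℕ → ℕ} {C D : ℕ}
    (ha : ∀ t, a t ≤ C) (hb : ∀ t, b t ≤ D) :
    digitSeries lam (a + b) = digitSeries lam a + digitSeries lam b := by
  simp only [digitSeries, Pi.add_apply, Nat.cast_add, add_mul]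
  exact (summable_digitSeries h0 h1 ha).tsum_add (summable_digitSeries h0 h1 hb)

theorem digitSeries_const (h0 : 0 ≤ lam) (h1 : lam < 1) (k : ℕ) :
    digitSeries lam (fun _ => k) = k * lam / (1 - lam) := by
  simp only [digitSeries, pow_succ', ← mul_assoc, tsum_mul_left,
    tsum_geometric_of_lt_one h0 h1, div_eq_mul_inv]

theorem mul_add_mul_mem_digitSet (h0 : 0 ≤ lam) (h1 : lam < 1) {N q : ℕ} {x : ℝ}
    (hq : q < N) (hx : x ∈ digitSet N lam) : q * lam + lam * x ∈ digitSet N lam := by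
  obtain ⟨a, ha, rfl⟩ := hx
  let b : ℕ → ℕ := fun t => Nat.casesOn t q a
  have hb : ∀ t, b t < N := fun t => by cases t <;> simp [b, hq, ha]
  refine ⟨b, hb, ?_⟩
  simp only [digitSeries]
  rw [(summable_digitSeries h0 h1 fun t => (hb t).le).tsum_eq_zero_add, ← tsum_mul_left]
  congr 1
  · simp [b, mul_comm]
  · exact tsum_congr fun t => by simp only [b]; ring

end DigitSeries

section Covering

variable {N : ℕ} {lam : ℝ}

/-- Following the orbit of `x` under the chosen right inverses of the maps `r ↦ dλ + λr` reads
off the digits of `x`; boundedness of `S` makes the remainders `λ^T · r_T` tend to zero. -/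
theorem subset_digitSet_of_covered (h0 : 0 ≤ lam) (h1 : lam < 1) {S : Set ℝ}
    (hS : Bornology.IsBounded S)
    (hcover : ∀ r ∈ S, ∃ d < N, ∃ r' ∈ S, r = d * lam + lam * r') :
    S ⊆ digitSet N lam := by
  intro x hx
  choose! d hd g hg hdg using hcover
  let orbit : ℕ → ℝ := fun t => g^[t] x
  have horbit : ∀ t, orbit t ∈ S := fun t => by
    induction t with
    | zero => exact hx
    | succ t ih => simpa only [orbit, Function.iterate_succ_apply'] using hg _ ih
  have hpartial : ∀ T, ∑ t ∈ Finset.range T, (d (orbit t) : ℝ) * lam ^ (t + 1)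
      = x - lam ^ T * orbit T := fun T => by
    induction T with
    | zero => simp [orbit]
    | succ T ih =>
      have hstep : orbit T = d (orbit T) * lam + lam * orbit (T + 1) := by
        simpa only [orbit, Function.iterate_succ_apply'] using hdg _ (horbit T)
      rw [Finset.sum_range_succ, ih]
      linear_combination (-lam ^ T) * hstep
  obtain ⟨C, hC⟩ := hS.exists_norm_le
  have hremainder : Tendsto (fun T => lam ^ T * orbit T) atTop (𝓝 0) :=
    (tendsto_pow_atTop_nhds_zero_of_lt_one h0 h1).zero_mul_isBoundedUnder_le
      (isBoundedUnder_of ⟨C, fun T => hC _ (horbit T)⟩)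
  have hsum : HasSum (fun t => (d (orbit t) : ℝ) * lam ^ (t + 1)) x := by
    refine (hasSum_iff_tendsto_nat_of_nonneg (fun t => by positivity) x).2 ?_
    simpa only [hpartial, sub_zero] using tendsto_const_nhds.sub hremainder
  exact ⟨fun t => d (orbit t), fun t => hd _ (horbit t), hsum.tsum_eq.symm⟩

theorem exists_digit_mem_Icc (h0 : 0 < lam) (h1 : lam < 1) (hN : 1 ≤ N * lam) {r : ℝ}
    (hr : r ∈ Set.Icc 0 ((N - 1) * lam / (1 - lam))) :
    ∃ d < N, ∃ r' ∈ Set.Icc 0 ((N - 1) * lam / (1 - lam)), r = d * lam + lam * r' := by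
  set M := ((N : ℝ) - 1) * lam / (1 - lam) with hM
  have hN1 : 1 ≤ N := by
    by_contra! h
    simp [Nat.lt_one_iff.1 h] at hN
    linarith
  have hMeq : M * (1 - lam) = (N - 1) * lam := div_mul_cancel₀ _ (by linarith)
  have hM1 : 1 ≤ M := by rw [hM, le_div_iff₀ (by linarith)]; linarith
  have hy : 0 ≤ r / lam := div_nonneg hr.1 h0.le
  have hcast : ((N - 1 : ℕ) : ℝ) = N - 1 := by rw [Nat.cast_sub hN1, Nat.cast_one]
  refine ⟨min (N - 1) ⌊r / lam⌋₊, by omega, r / lam - (min (N - 1) ⌊r / lam⌋₊ : ℕ), ?_,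
    by field_simp; ring⟩
  rcases le_total ⌊r / lam⌋₊ (N - 1) with hle | hle
  · rw [min_eq_right hle]
    exact ⟨sub_nonneg.2 (Nat.floor_le hy), by linarith [Nat.lt_floor_add_one (r / lam)]⟩
  · rw [min_eq_left hle, hcast]
    have hfloor : ((N - 1 : ℕ) : ℝ) ≤ r / lam := (Nat.cast_le.2 hle).trans (Nat.floor_le hy)
    rw [hcast] at hfloor
    refine ⟨by linarith, ?_⟩
    rw [sub_le_iff_le_add, div_le_iff₀ h0]
    linarith [hr.2]

/-- If `Nλ ≥ 1` the images of `[0, M]` under `r ↦ dλ + λr`, `d < N`, overlap and cover it. -/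
theorem Icc_subset_digitSet (h0 : 0 < lam) (h1 : lam < 1) (hN : 1 ≤ N * lam) :
    Set.Icc 0 ((N - 1) * lam / (1 - lam)) ⊆ digitSet N lam :=
  subset_digitSet_of_covered h0.le h1 (Metric.isBounded_Icc _ _)
    fun _ hr => exists_digit_mem_Icc h0 h1 hN hr

end Covering

section Progression

variable {n : ℕ} {lam : ℝ}

theorem sub_mem_digitSet_sub_digitSet (h0 : 0 ≤ lam) (h1 : lam < 1) {x : ℝ}
    (hx : x ∈ digitSet (2 * n - 1) lam) :
    x - (n - 1) * lam / (1 - lam) ∈ digitSet n lam - digitSet n lam := by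
  obtain ⟨d, hd, rfl⟩ := hx
  have hn : 1 ≤ n := by have := hd 0; omega
  let v : ℕ → ℕ := fun t => d t - (n - 1)
  let u : ℕ → ℕ := fun t => (n - 1) - d t
  have hv : ∀ t, v t < n := fun t => by have := hd t; simp only [v]; omega
  have hu : ∀ t, u t < n := fun t => by simp only [u]; omega
  have hdigits : v + (fun _ => n - 1) = u + d := funext fun t => by
    simp only [Pi.add_apply, v, u]; omega
  have hsum := congrArg (digitSeries lam) hdigits
  rw [digitSeries_add h0 h1 (fun t => (hv t).le) (fun _ => le_rfl),
    digitSeries_add h0 h1 (fun t => (hu t).le) (fun t => (hd t).le), digitSeries_const h0 h1,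
    Nat.cast_sub hn, Nat.cast_one] at hsum
  exact ⟨digitSeries lam v, ⟨v, hv, rfl⟩, digitSeries lam u, ⟨u, hu, rfl⟩, by linarith⟩

theorem exists_forall_add_mul_mem_digitSet (h0 : 0 ≤ lam) (h1 : lam < 1)
    (hhalf : (1 / 2 : ℝ) ∈ digitSet n lam - digitSet n lam) :
    ∃ y, ∀ i < 2 * n, lam * y + i * (lam / 2) ∈ digitSet n lam := by
  obtain ⟨z, hz, y, hy, hzy⟩ := hhalf
  refine ⟨y, fun i hi => ?_⟩
  obtain ⟨q, rfl | rfl⟩ := Nat.even_or_odd' i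
  · convert mul_add_mul_mem_digitSet h0 h1 (q := q) (by omega) hy using 1
    push_cast
    ring
  · convert mul_add_mul_mem_digitSet h0 h1 (q := q) (by omega) hz using 1
    push_cast
    linear_combination (-lam) * hzy

end Progression

theorem ap_length_two_n_of_ratio_ge_general (n : ℕ)
    (lam : ℝ) (hlam : lam ∈ Set.Ioo (0:ℝ) (1 / n))
    (hge : lam ≥ 1 / (2 * n - 1)) :
    ∃ a δ : ℝ, 0 < δ ∧ ∀ i : ℕ, i < 2 * n → a + i * δ ∈ selfSimilarSet n lam := by
  obtain ⟨h0, hlt⟩ := hlam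
  have hn : 1 ≤ n := Nat.one_le_iff_ne_zero.2 fun h => by simp [h] at hlt; linarith
  have hnR : (1 : ℝ) ≤ n := by exact_mod_cast hn
  have hnlam : n * lam < 1 := by rwa [lt_div_iff₀ (by linarith), mul_comm] at hlt
  have h1 : lam < 1 := by nlinarith
  have hratio : 1 ≤ (2 * n - 1) * lam := by
    rwa [ge_iff_le, div_le_iff₀ (by linarith), mul_comm] at hge
  have hN : ((2 * n - 1 : ℕ) : ℝ) = 2 * n - 1 := by
    rw [Nat.cast_sub (by omega), Nat.cast_mul, Nat.cast_two, Nat.cast_one]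
  have hM : 1 / 2 ≤ (n - 1) * lam / (1 - lam) := by rw [le_div_iff₀ (by linarith)]; linarith
  have hmem : 1 / 2 + (n - 1) * lam / (1 - lam) ∈ digitSet (2 * n - 1) lam := by
    refine Icc_subset_digitSet h0 h1 (by rwa [hN]) ⟨by linarith, ?_⟩
    rw [hN]
    linarith [show (2 * n - 1 - 1 : ℝ) * lam / (1 - lam) = 2 * ((n - 1) * lam / (1 - lam)) by ring]
  obtain ⟨y, hy⟩ := exists_forall_add_mul_mem_digitSet h0.le h1
    (by simpa using sub_mem_digitSet_sub_digitSet h0.le h1 hmem)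
  have hc : 0 < lam + (1 - n * lam) / (n - 1) :=
    add_pos_of_pos_of_nonneg h0 (div_nonneg (by linarith) (by linarith))
  refine ⟨(lam + (1 - n * lam) / (n - 1)) * (lam * y),
    (lam + (1 - n * lam) / (n - 1)) * (lam / 2), by positivity, fun i hi => ?_⟩
  obtain ⟨a, ha, hxa⟩ := hy i hi
  exact ⟨a, ha, by rw [← digitSeries, ← hxa]; ring⟩

/-- If `λ ≥ 1/(2n - 1)`, then `E_λ^n` contains an arithmetic progression
of length `2n`. -/
theorem ap_length_two_n_of_ratio_ge (n : ℕ) (hn : 2 ≤ n)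
    (lam : ℝ) (hlam : lam ∈ Set.Ioo (0:ℝ) (1 / n))
    (hge : lam ≥ 1 / (2 * n - 1)) :
    ∃ a δ : ℝ, 0 < δ ∧ ∀ i : ℕ, i < 2 * n → a + i * δ ∈ selfSimilarSet n lam :=
  ap_length_two_n_of_ratio_ge_general n lam hlam hge
end

section
/- Let n ≥ 2 be an integer, λ ∈ (0, 1/n), α = (1 − nλ)/(n − 1), and let E_λ^n = { (λ+α)·∑_{t=1}^{∞} a_t λ^t : a_t ∈ {0,1,…,n−1} for all t ≥ 1 }. Then every arithmetic progression contained in E_λ^n has length at most ⌊1/α⌋ + 1 = ⌊(n−1)/(1−nλ)⌋ + 1. -/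
/-!
Points of `E_λ^n` are coded by digit sequences, and the points whose codes share the first
`m` digits form a copy of `E_λ^n` scaled by `λ^m`, of diameter at most `λ^(m+1)`. Inside such
a cylinder, points whose `m`-th digits differ are at least `αλ^(m+1)` apart, the gap between
consecutive first-level pieces `λE_λ^n + iλ(λ+α)`. Take `m` to be the first digit at which two
consecutive terms of an arithmetic progression of length `k` in `E_λ^n` disagree: its common
difference is at least `αλ^(m+1)`, while all its terms lie in one cylinder of level `m`, so
`(k-1)αλ^(m+1) ≤ λ^(m+1)`.
-/

open Finset

lemma exists_first_consecutive_disagreement {β : Type*} (A : ℕ → ℕ → β) {K : ℕ}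
    (h : ∃ t, A 0 t ≠ A K t) :
    ∃ m, (∀ i ≤ K, ∀ t < m, A i t = A 0 t) ∧ ∃ i < K, A i m ≠ A (i + 1) m := by
  classical
  have chain : ∀ t, (∀ i < K, A i t = A (i + 1) t) → ∀ i ≤ K, A i t = A 0 t := by
    intro t hcons i hi
    induction i with
    | zero => rfl
    | succ i ih => rw [← hcons i (by omega), ih (by omega)]
  have hex : ∃ t, ∃ i < K, A i t ≠ A (i + 1) t := by
    by_contra! hnone
    obtain ⟨t, ht⟩ := h
    exact ht (chain t (hnone t) K le_rfl).symm
  refine ⟨Nat.find hex, fun i hi t ht => ?_, Nat.find_spec hex⟩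
  exact chain t (fun j hj => not_not.mp fun hne => Nat.find_min hex ht ⟨j, hj, hne⟩) i hi

noncomputable def codingMap (n : ℕ) (lam : ℝ) (b : ℕ → ℕ) : ℝ :=
  (lam + (1 - n * lam) / (n - 1)) * ∑' t, (b t : ℝ) * lam ^ (t + 1)

lemma mem_selfSimilarSet {n : ℕ} {lam x : ℝ} :
    x ∈ selfSimilarSet n lam ↔ ∃ b : ℕ → ℕ, (∀ t, b t < n) ∧ x = codingMap n lam b :=
  Iff.rfl

section codingMap

variable {n : ℕ} {lam : ℝ} {b b' : ℕ → ℕ}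

lemma lt_one_of_natCast_mul_lt_one (hn : 1 ≤ n) (hl0 : 0 ≤ lam) (hnl : n * lam < 1) : lam < 1 :=
  (le_mul_of_one_le_left hl0 (by exact_mod_cast hn)).trans_lt hnl

lemma summable_digit_series (hl0 : 0 ≤ lam) (hl1 : lam < 1) (hb : ∀ t, b t < n) :
    Summable fun t => (b t : ℝ) * lam ^ (t + 1) := by
  refine .of_nonneg_of_le (fun t => by positivity) (fun t => ?_)
    ((summable_geometric_of_lt_one hl0 hl1).mul_left ((n : ℝ) * lam))
  rw [pow_succ, ← mul_assoc, mul_right_comm]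
  gcongr
  exact_mod_cast (hb t).le

lemma codingMap_eq_sum_add_shift (hl0 : 0 ≤ lam) (hl1 : lam < 1) (hb : ∀ t, b t < n) (m : ℕ) :
    codingMap n lam b = (lam + (1 - n * lam) / (n - 1)) * ∑ t ∈ range m, (b t : ℝ) * lam ^ (t + 1)
      + lam ^ m * codingMap n lam (fun t => b (t + m)) := by
  rw [codingMap, codingMap, ← (summable_digit_series hl0 hl1 hb).sum_add_tsum_nat_add m, mul_add,
    mul_left_comm (lam ^ m), ← tsum_mul_left (a := lam ^ m)]
  congr 2
  exact tsum_congr fun t => by ring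

lemma codingMap_sub_of_eqOn (hl0 : 0 ≤ lam) (hl1 : lam < 1) (hb : ∀ t, b t < n)
    (hb' : ∀ t, b' t < n) {m : ℕ} (hbb' : ∀ t < m, b t = b' t) :
    codingMap n lam b - codingMap n lam b' =
      lam ^ m * (codingMap n lam (fun t => b (t + m)) - codingMap n lam (fun t => b' (t + m))) := by
  rw [codingMap_eq_sum_add_shift hl0 hl1 hb m, codingMap_eq_sum_add_shift hl0 hl1 hb' m,
    sum_congr rfl fun t ht => by rw [hbb' t (mem_range.mp ht)]]
  ring

lemma codingMap_nonneg (hn : 1 ≤ n) (hl0 : 0 ≤ lam) (hnl : n * lam ≤ 1) :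
    0 ≤ codingMap n lam b := by
  have : (1 : ℝ) ≤ n := by exact_mod_cast hn
  unfold codingMap
  exact mul_nonneg (add_nonneg hl0 (div_nonneg (by linarith) (by linarith)))
    (tsum_nonneg fun t => by positivity)

lemma codingMap_le (hn : 2 ≤ n) (hl0 : 0 ≤ lam) (hnl : n * lam < 1) (hb : ∀ t, b t < n) :
    codingMap n lam b ≤ lam := by
  have hn' : (2 : ℝ) ≤ n := by exact_mod_cast hn
  have hl1 := lt_one_of_natCast_mul_lt_one (by omega) hl0 hnl
  have hn1 : (n : ℝ) - 1 ≠ 0 := by linarith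
  have hc : lam + (1 - n * lam) / (n - 1) = (1 - lam) / (n - 1) := by
    field_simp
    ring
  have hsum : ∑' t, (b t : ℝ) * lam ^ (t + 1) ≤ ∑' t : ℕ, ((n : ℝ) - 1) * lam * lam ^ t := by
    refine (summable_digit_series hl0 hl1 hb).tsum_le_tsum (fun t => ?_)
      ((summable_geometric_of_lt_one hl0 hl1).mul_left _)
    have : (b t : ℝ) + 1 ≤ n := by exact_mod_cast hb t
    rw [pow_succ, ← mul_assoc, mul_right_comm]
    gcongr
    linarith
  rw [tsum_mul_left, tsum_geometric_of_lt_one hl0 hl1] at hsum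
  calc codingMap n lam b ≤ (1 - lam) / (n - 1) * (((n : ℝ) - 1) * lam * (1 - lam)⁻¹) := by
        rw [codingMap, hc]
        exact mul_le_mul_of_nonneg_left hsum (div_nonneg (by linarith) (by linarith))
    _ = lam := by
        field_simp [show (1 : ℝ) - lam ≠ 0 by linarith]

lemma abs_codingMap_sub_le (hn : 2 ≤ n) (hl0 : 0 ≤ lam) (hnl : n * lam < 1) (hb : ∀ t, b t < n)
    (hb' : ∀ t, b' t < n) {m : ℕ} (hbb' : ∀ t < m, b t = b' t) :
    |codingMap n lam b - codingMap n lam b'| ≤ lam ^ (m + 1) := by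
  have hl1 := lt_one_of_natCast_mul_lt_one (by omega) hl0 hnl
  rw [codingMap_sub_of_eqOn hl0 hl1 hb hb' hbb', abs_mul, abs_of_nonneg (by positivity), pow_succ]
  gcongr
  exact abs_sub_le_of_nonneg_of_le (codingMap_nonneg (by omega) hl0 hnl.le)
    (codingMap_le hn hl0 hnl fun t => hb _) (codingMap_nonneg (by omega) hl0 hnl.le)
    (codingMap_le hn hl0 hnl fun t => hb' _)

lemma codingMap_add_le_of_lt (hn : 2 ≤ n) (hl0 : 0 ≤ lam) (hnl : n * lam < 1)
    (hb : ∀ t, b t < n) (hb' : ∀ t, b' t < n) (hlt : b 0 < b' 0) :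
    codingMap n lam b + lam * ((1 - n * lam) / (n - 1)) ≤ codingMap n lam b' := by
  have hn' : (2 : ℝ) ≤ n := by exact_mod_cast hn
  have hl1 := lt_one_of_natCast_mul_lt_one (by omega) hl0 hnl
  have hα : 0 ≤ (1 - n * lam) / (n - 1) := div_nonneg (by linarith) (by linarith)
  have hdigit : (b 0 : ℝ) + 1 ≤ b' 0 := by exact_mod_cast hlt
  have htail := codingMap_le hn hl0 hnl (b := fun t => b (t + 1)) fun t => hb _
  have htail' := codingMap_nonneg (b := fun t => b' (t + 1)) (by omega) hl0 hnl.le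
  rw [codingMap_eq_sum_add_shift hl0 hl1 hb 1, codingMap_eq_sum_add_shift hl0 hl1 hb' 1]
  simp only [sum_range_one, zero_add, pow_one]
  -- raising the first digit by one gains `λ(λ+α)`; the tails can lose at most `λ·λ`
  nlinarith [mul_le_mul_of_nonneg_left hdigit (mul_nonneg (add_nonneg hl0 hα) hl0)]

lemma le_abs_codingMap_sub (hn : 2 ≤ n) (hl0 : 0 ≤ lam) (hnl : n * lam < 1)
    (hb : ∀ t, b t < n) (hb' : ∀ t, b' t < n) {m : ℕ} (hbb' : ∀ t < m, b t = b' t)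
    (hm : b m ≠ b' m) :
    lam ^ (m + 1) * ((1 - n * lam) / (n - 1)) ≤ |codingMap n lam b - codingMap n lam b'| := by
  have hl1 := lt_one_of_natCast_mul_lt_one (by omega) hl0 hnl
  wlog hlt : b m < b' m generalizing b b'
  · rw [abs_sub_comm]
    exact this hb' hb (fun t ht => (hbb' t ht).symm) hm.symm (hm.lt_or_gt.resolve_left hlt)
  rw [codingMap_sub_of_eqOn hl0 hl1 hb hb' hbb', abs_mul, abs_of_nonneg (by positivity),
    pow_succ, mul_assoc]
  gcongr
  refine le_trans ?_ (neg_le_abs _)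
  have := codingMap_add_le_of_lt hn hl0 hnl (b := fun t => b (t + m)) (b' := fun t => b' (t + m))
    (fun t => hb _) (fun t => hb' _) (by simpa using hlt)
  linarith

end codingMap

theorem last_index_mul_le_one_of_ap {n : ℕ} {lam : ℝ} (hn : 2 ≤ n) (hl0 : 0 < lam)
    (hnl : n * lam < 1) {K : ℕ} {a δ : ℝ} (hδ : 0 < δ) {A : ℕ → ℕ → ℕ}
    (hA : ∀ i ≤ K, (∀ t, A i t < n) ∧ a + i * δ = codingMap n lam (A i)) :
    K * ((1 - n * lam) / (n - 1)) ≤ 1 := by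
  rcases K.eq_zero_or_pos with rfl | hK
  · simp
  have hdigits i (hi : i ≤ K) := (hA i hi).1
  have hpoint i (hi : i ≤ K) := (hA i hi).2
  have hends : ∃ t, A 0 t ≠ A K t := by
    by_contra! h
    have hsame : a + K * δ = a + (0 : ℕ) * δ := by
      rw [hpoint K le_rfl, hpoint 0 K.zero_le, funext h]
    push_cast at hsame
    exact (mul_pos (Nat.cast_pos.mpr hK) hδ).ne' (by linarith)
  obtain ⟨m, hagree, i, hiK, hne⟩ := exists_first_consecutive_disagreement A hends
  have hgap : lam ^ (m + 1) * ((1 - n * lam) / (n - 1)) ≤ δ :=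
    calc _ ≤ |codingMap n lam (A (i + 1)) - codingMap n lam (A i)| :=
          le_abs_codingMap_sub hn hl0.le hnl (hdigits _ hiK) (hdigits _ hiK.le)
            (fun t ht => by rw [hagree _ hiK t ht, hagree _ hiK.le t ht]) hne.symm
      _ = δ := by
          rw [← hpoint _ hiK, ← hpoint _ hiK.le]
          push_cast
          rw [add_sub_add_left_eq_sub, ← sub_mul, add_sub_cancel_left, one_mul, abs_of_pos hδ]
  have hdiam : K * δ ≤ lam ^ (m + 1) :=
    calc (K : ℝ) * δ = |codingMap n lam (A K) - codingMap n lam (A 0)| := by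
          rw [← hpoint _ le_rfl, ← hpoint _ K.zero_le]
          push_cast
          rw [zero_mul, add_zero, add_sub_cancel_left, abs_of_pos (by positivity)]
      _ ≤ lam ^ (m + 1) :=
          abs_codingMap_sub_le hn hl0.le hnl (hdigits _ le_rfl) (hdigits _ K.zero_le)
            (hagree K le_rfl)
  refine le_of_mul_le_mul_right ?_ (pow_pos hl0 (m + 1))
  calc K * ((1 - n * lam) / (n - 1)) * lam ^ (m + 1)
        = K * (lam ^ (m + 1) * ((1 - n * lam) / (n - 1))) := by ring
    _ ≤ K * δ := by gcongr
    _ ≤ lam ^ (m + 1) := hdiam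
    _ = 1 * lam ^ (m + 1) := (one_mul _).symm

/-- Every arithmetic progression contained in `E_λ^n` has length at most
`⌊1/α⌋ + 1 = ⌊(n-1)/(1-nλ)⌋ + 1`, where `α = (1-nλ)/(n-1)`. -/
theorem ap_length_le_floor_inv_alpha (n : ℕ) (hn : 2 ≤ n)
    (lam : ℝ) (hlam : lam ∈ Set.Ioo (0:ℝ) (1 / n))
    (α : ℝ) (hα : α = (1 - n * lam) / (n - 1))
    (k : ℕ) (a δ : ℝ) (hδ : 0 < δ)
    (hAP : ∀ i : ℕ, i < k → a + i * δ ∈ selfSimilarSet n lam) :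
    k ≤ ⌊1 / α⌋₊ + 1 ∧ ⌊1 / α⌋₊ = ⌊((n:ℝ) - 1) / (1 - n * lam)⌋₊ := by
  subst hα
  obtain ⟨hl0, hlt⟩ := hlam
  have hnl : (n : ℝ) * lam < 1 := by rwa [lt_div_iff₀' (by positivity)] at hlt
  refine ⟨?_, by rw [one_div_div]⟩
  rcases k with _ | K
  · omega
  simp only [mem_selfSimilarSet] at hAP
  choose! A hA using hAP
  have hKα := last_index_mul_le_one_of_ap hn hl0 hnl hδ fun i hi => hA i (Nat.lt_succ_of_le hi)
  have hn' : (2 : ℝ) ≤ n := by exact_mod_cast hn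
  have hα0 : 0 < (1 - n * lam) / (n - 1) := div_pos (by linarith) (by linarith)
  have hK : (K : ℝ) ≤ 1 / ((1 - n * lam) / (n - 1)) := by rwa [le_div_iff₀ hα0]
  exact Nat.add_le_add_right (Nat.le_floor hK) 1
end

section
/- Let n ≥ 2 be an integer and let λ satisfy 1/(2n−1) ≤ λ < 1/n. Let k = ⌊1/λ⌋ and let β = k/2 if k is even and β = (k+1)/2 if k is odd. Then there exists a sequence of integers {d_t}_{t=3}^{∞} with d_t ∈ {−(n−1), …, −1, 0, 1, …, n−1} such that 2βλ² − λ = ∑_{t=3}^{∞} (2 d_t) λ^t. -/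
/-!
Since `2β ∈ {k, k + 1}` and `kλ ≤ 1 < (k + 1)λ`, we have `|2βλ - 1| ≤ λ`, so it suffices to expand
`y = (2βλ - 1)/λ²`, with `|y| ≤ 1/λ`, as `∑ 2dₜ λ^t`. Put `M = 2(n - 1)/(1 - λ)`, so that
`M = 2(n - 1) + λM` and, because `(2n - 1)λ ≥ 1`, `λM ≥ 1`. Then `|y| ≤ M`, and the even digits
`2d`, `|d| ≤ n - 1`, are `λM`-dense in `[-M, M]`, so the greedy map `r ↦ (r - 2d)/λ` keeps the
remainder in `[-M, M]`; the remainders times `λ^t` tend to zero and the digits expand `y`.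
-/
theorem exists_hasSum_digit_mul_pow {A : Set ℝ} {lam M y : ℝ} (hlam0 : 0 < lam) (hlam1 : lam < 1)
    (hA : ∀ r, |r| ≤ M → ∃ a ∈ A, |r - a| ≤ lam * M) (hy : |y| ≤ M) :
    ∃ a : ℕ → ℝ, (∀ t, a t ∈ A) ∧ HasSum (fun t => a t * lam ^ t) y := by
  have hstep : ∀ r : {r : ℝ // |r| ≤ M}, ∃ s : {s : ℝ // |s| ≤ M}, (r : ℝ) - lam * s ∈ A := by
    rintro ⟨r, hr⟩
    obtain ⟨a, ha, hra⟩ := hA r hr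
    refine ⟨⟨(r - a) / lam, ?_⟩, ?_⟩
    · rwa [abs_div, abs_of_pos hlam0, div_le_iff₀' hlam0]
    · simpa [mul_div_cancel₀ _ hlam0.ne'] using ha
  choose next hnext using hstep
  obtain ⟨rem, hrem0, hrem⟩ : ∃ rem : ℕ → {r : ℝ // |r| ≤ M},
      rem 0 = ⟨y, hy⟩ ∧ ∀ t, rem (t + 1) = next (rem t) :=
    ⟨fun t => next^[t] ⟨y, hy⟩, rfl, fun t => Function.iterate_succ_apply' ..⟩
  refine ⟨fun t => rem t - lam * rem (t + 1), fun t => ?_, ?_⟩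
  · simpa only [hrem] using hnext (rem t)
  have hf : Summable fun t => lam ^ t * rem t := by
    refine Summable.of_norm_bounded ((summable_geometric_of_lt_one hlam0.le hlam1).mul_left M)
      fun t => ?_
    rw [Real.norm_eq_abs, abs_mul, abs_of_pos (pow_pos hlam0 t), mul_comm]
    exact mul_le_mul_of_nonneg_right (rem t).2 (pow_nonneg hlam0.le t)
  have htel : HasSum (fun t => lam ^ t * rem t - lam ^ (t + 1) * rem (t + 1)) y := by
    simpa [hrem0] using hf.hasSum.sub ((hasSum_nat_add_iff' 1).mpr hf.hasSum)
  convert htel using 2 with t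
  ring

theorem exists_abs_sub_two_mul_le {n : ℕ} (hn : 1 ≤ n) {ε r : ℝ} (hε : 1 ≤ ε)
    (hr : |r| ≤ 2 * ((n : ℝ) - 1) + ε) : ∃ d : ℤ, |d| ≤ (n : ℤ) - 1 ∧ |r - 2 * d| ≤ ε := by
  have hn' : (0 : ℤ) ≤ n - 1 := by omega
  rw [abs_le] at hr
  by_cases htop : 2 * ((n : ℝ) - 1) < r
  · refine ⟨n - 1, by rw [abs_of_nonneg hn'], ?_⟩
    rw [abs_le]
    push_cast
    constructor <;> linarith
  by_cases hbot : r < -(2 * ((n : ℝ) - 1))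
  · refine ⟨-(n - 1), by rw [abs_neg, abs_of_nonneg hn'], ?_⟩
    rw [abs_le]
    push_cast
    constructor <;> linarith
  refine ⟨round (r / 2), abs_le.mpr ⟨?_, ?_⟩, ?_⟩
  · have : -(n : ℝ) < round (r / 2) := by linarith [sub_half_lt_round (r / 2)]
    have : -(n : ℤ) < round (r / 2) := by exact_mod_cast this
    omega
  · have : (round (r / 2) : ℝ) < n := by linarith [round_le_add_half (r / 2)]
    have : round (r / 2) < (n : ℤ) := by exact_mod_cast this
    omega
  · have := abs_sub_round (r / 2)
    rw [abs_le] at this ⊢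
    constructor <;> linarith

theorem abs_natCast_mul_sub_one_le {lam : ℝ} (hlam : 0 < lam) {j : ℕ}
    (hj : j = ⌊1 / lam⌋₊ ∨ j = ⌊1 / lam⌋₊ + 1) : |j * lam - 1| ≤ lam := by
  have hle : (⌊1 / lam⌋₊ : ℝ) * lam ≤ 1 :=
    (le_div_iff₀ hlam).mp (Nat.floor_le (by positivity))
  have hlt : 1 < ((⌊1 / lam⌋₊ : ℝ) + 1) * lam :=
    (div_lt_iff₀ hlam).mp (Nat.lt_floor_add_one _)
  rw [abs_le]
  rcases hj with rfl | rfl <;> push_cast <;> constructor <;> nlinarith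

/-- For `1/(2n-1) ≤ λ < 1/n`, with `k = ⌊1/λ⌋` and `β = k/2` (`k` even) or
`β = (k+1)/2` (`k` odd), there is a sequence of integer digits `d_t ∈ {-(n-1), …, n-1}`
with `2βλ² - λ = ∑_{t≥3} (2 d_t) λ^t`. -/
theorem expansion_of_two_beta (n : ℕ) (hn : 2 ≤ n) (lam : ℝ)
    (h1 : 1 / (2 * n - 1) ≤ lam) (h2 : lam < 1 / n)
    (k : ℕ) (hk : k = ⌊1 / lam⌋₊)
    (β : ℕ) (hβ : β = if Even k then k / 2 else (k + 1) / 2) :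
    ∃ d : ℕ → ℤ, (∀ t : ℕ, |d t| ≤ (n:ℤ) - 1) ∧
      2 * β * lam ^ 2 - lam = ∑' t : ℕ, (2 * (d t) : ℝ) * lam ^ (t + 3) := by
  have hn' : (2 : ℝ) ≤ n := by exact_mod_cast hn
  have hlam0 : 0 < lam := (one_div_pos.mpr (by linarith)).trans_le h1
  have hlam1 : lam < 1 := h2.trans_le (div_le_one_of_le₀ (by linarith) (by positivity))
  have hlam2 : 1 ≤ (2 * n - 1) * lam := (div_le_iff₀' (by linarith)).mp h1
  set M : ℝ := 2 * ((n : ℝ) - 1) / (1 - lam)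
  have hM : M = 2 * ((n : ℝ) - 1) + lam * M := by
    linear_combination div_mul_cancel₀ (2 * ((n : ℝ) - 1)) (sub_pos.mpr hlam1).ne'
  have hlamM : 1 ≤ lam * M := by nlinarith
  have hβk : 2 * β = k ∨ 2 * β = k + 1 := by
    rw [hβ]
    split_ifs with he <;> [rw [Nat.even_iff] at he; rw [Nat.not_even_iff] at he] <;> omega
  have hβlam : |2 * (β : ℝ) * lam - 1| ≤ lam := by
    exact_mod_cast abs_natCast_mul_sub_one_le hlam0 (hk ▸ hβk)
  have hy : |(2 * β * lam - 1) / lam ^ 2| ≤ M := by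
    rw [abs_div, abs_of_pos (pow_pos hlam0 2), div_le_iff₀ (pow_pos hlam0 2)]
    nlinarith [mul_le_mul_of_nonneg_left hlamM hlam0.le]
  have hnet : ∀ r, |r| ≤ M →
      ∃ a ∈ {a : ℝ | ∃ d : ℤ, |d| ≤ (n : ℤ) - 1 ∧ a = 2 * d}, |r - a| ≤ lam * M := by
    intro r hr
    obtain ⟨d, hd, hrd⟩ := exists_abs_sub_two_mul_le (by omega) hlamM (hM ▸ hr)
    exact ⟨_, ⟨d, hd, rfl⟩, hrd⟩
  obtain ⟨a, ha, hsum⟩ := exists_hasSum_digit_mul_pow hlam0 hlam1 hnet hy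
  choose d hd using ha
  refine ⟨d, fun t => (hd t).1, ?_⟩
  rw [show 2 * β * lam ^ 2 - lam = lam ^ 3 * ((2 * β * lam - 1) / lam ^ 2) by field_simp,
    ← (hsum.mul_left _).tsum_eq]
  refine tsum_congr fun t => ?_
  rw [(hd t).2]
  ring
end

section
/- Let n ≥ 2 be an integer and let λ satisfy 1/(2n−1) ≤ λ < 1/n. Let k = ⌊1/λ⌋ and let β = k/2 if k is even and β = (k+1)/2 if k is odd. Then |2βλ² − λ| ≤ 2(n−1)λ³/(1−λ). -/
/-! Since `k = ⌊1/λ⌋`, both `kλ` and `(k+1)λ` lie within `λ` of `1`, and `2β` is one of `k`, `k+1`;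
hence `|2βλ² - λ| = λ·|2βλ - 1| ≤ λ²`. The bound `λ² ≤ 2(n-1)λ³/(1-λ)` is a rearrangement of
`1 ≤ (2n-1)λ`. -/

lemma two_mul_ite_half_eq (k : ℕ) :
    2 * (if Even k then k / 2 else (k + 1) / 2) = k ∨
      2 * (if Even k then k / 2 else (k + 1) / 2) = k + 1 := by
  split_ifs with hk
  · exact .inl (Nat.two_mul_div_two_of_even hk)
  · exact .inr (Nat.two_mul_div_two_of_even (Nat.not_even_iff_odd.mp hk).add_one)

lemma abs_natCast_mul_sub_one_le_s13 {x : ℝ} (hx : 0 < x) {m : ℕ}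
    (hm : m = ⌊1 / x⌋₊ ∨ m = ⌊1 / x⌋₊ + 1) : |m * x - 1| ≤ x := by
  have floor_mul_le : (⌊1 / x⌋₊ : ℝ) * x ≤ 1 :=
    (le_div_iff₀ hx).mp (Nat.floor_le (by positivity))
  have lt_floor_add_one_mul : 1 < ((⌊1 / x⌋₊ : ℝ) + 1) * x :=
    (div_lt_iff₀ hx).mp (Nat.lt_floor_add_one _)
  rw [abs_le]
  rcases hm with rfl | rfl <;> push_cast <;> constructor <;> linarith

lemma sq_le_two_mul_sub_one_mul_pow_three_div {x N : ℝ} (hx : x < 1)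
    (h : 1 ≤ x * (2 * N - 1)) : x ^ 2 ≤ 2 * (N - 1) * x ^ 3 / (1 - x) := by
  rw [le_div_iff₀ (sub_pos.mpr hx)]
  nlinarith [sq_nonneg x]

/-- For `1/(2n-1) ≤ λ < 1/n`, with `k = ⌊1/λ⌋` and `β = k/2` (`k` even) or
`β = (k+1)/2` (`k` odd), one has `|2βλ² - λ| ≤ 2(n-1)λ³/(1-λ)`. -/
theorem abs_two_beta_bound (n : ℕ) (hn : 2 ≤ n) (lam : ℝ)
    (h1 : 1 / (2 * n - 1) ≤ lam) (h2 : lam < 1 / n)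
    (k : ℕ) (hk : k = ⌊1 / lam⌋₊)
    (β : ℕ) (hβ : β = if Even k then k / 2 else (k + 1) / 2) :
    |2 * β * lam ^ 2 - lam| ≤ 2 * ((n:ℝ) - 1) * lam ^ 3 / (1 - lam) := by
  have hn' : (2 : ℝ) ≤ n := by exact_mod_cast hn
  have hden : (0 : ℝ) < 2 * n - 1 := by linarith
  have hlam0 : 0 < lam := (one_div_pos.mpr hden).trans_le h1
  have hlam1 : lam < 1 := h2.trans_le (div_le_one_of_le₀ (by linarith) (by linarith))
  have h2β : 2 * β = k ∨ 2 * β = k + 1 := hβ ▸ two_mul_ite_half_eq k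
  calc |2 * β * lam ^ 2 - lam| = |lam * (((2 * β : ℕ) : ℝ) * lam - 1)| := by push_cast; ring_nf
    _ = lam * |((2 * β : ℕ) : ℝ) * lam - 1| := by rw [abs_mul, abs_of_pos hlam0]
    _ ≤ lam * lam :=
        mul_le_mul_of_nonneg_left (abs_natCast_mul_sub_one_le_s13 hlam0 (hk ▸ h2β)) hlam0.le
    _ = lam ^ 2 := (sq lam).symm
    _ ≤ 2 * ((n:ℝ) - 1) * lam ^ 3 / (1 - lam) :=
        sq_le_two_mul_sub_one_mul_pow_three_div hlam1 ((div_le_iff₀ hden).mp h1)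
end
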